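/- Self-normalized martingale concentration: under the martingale setup with predictable bounds, for every fixed k ≥ 1, every β > 0, and every δ ∈ (0, 1/e], P( |M_k| ≥ √( (U_k²/4 + β)·(2 + log(U_k²/(4β) + 1))·log(1/δ) ) ) ≤ δ. -/

import Mathlib

/-!
Since `X_i` is centred and `C_i`, `D_i` are `ℱ_{i-1}`-measurable, the range `[C_i, D_i]` contains
`0`. Bounding `exp (t X_i)` by its chord over `[C_i, D_i]` and evaluating the chord with Hoeffding's
lemma for the centred two-point law on `{C_i, D_i}` gives the conditional Hoeffding lemma
`E[exp (t X_i - t² (D_i - C_i)² / 8) | ℱ_{i-1}] ≤ 1`, so `exp (t M_n - t² U_n² / 8)` has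
expectation at most `1` for every `t`; as `|X_i| ≤ D_i - C_i`, each factor is at most `e²`, which
provides the integrability. Integrating in `t` against the centred Gaussian of variance `1 / β`
(method of mixtures) gives `E[√(β / (U²/4 + β)) exp (M² / (2 (U²/4 + β)))] ≤ 1`, and on the event
in question this variable is at least `1 / δ` because `log (1 / δ) ≥ 1`, so Markov's inequality
concludes.
-/

open Real MeasureTheory ProbabilityTheory unitInterval Finset

lemma exp_mul_le_secant {c d x : ℝ} (hcx : c ≤ x) (hxd : x ≤ d) (hcd : c < d) (t : ℝ) :
    exp (t * x) ≤ ((d - x) * exp (t * c) + (x - c) * exp (t * d)) / (d - c) := by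
  have hΔ : 0 < d - c := sub_pos.mpr hcd
  have h := convexOn_exp.2 (Set.mem_univ (t * c)) (Set.mem_univ (t * d))
    (div_nonneg (sub_nonneg.mpr hxd) hΔ.le) (div_nonneg (sub_nonneg.mpr hcx) hΔ.le)
    (by field_simp; ring)
  simp only [smul_eq_mul] at h
  calc exp (t * x) = exp ((d - x) / (d - c) * (t * c) + (x - c) / (d - c) * (t * d)) := by
        congr 1; field_simp; ring
    _ ≤ _ := h
    _ = _ := by ring

/-- Hoeffding's lemma for the centred law on `{c, d}`, whose moment generating function at `t` is
the left-hand side. -/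
lemma two_point_hoeffding {c d : ℝ} (hc : c ≤ 0) (hd : 0 ≤ d) (hcd : c < d) (t : ℝ) :
    (d * exp (t * c) - c * exp (t * d)) / (d - c) ≤ exp (t ^ 2 * (d - c) ^ 2 / 8) := by
  have hΔ : 0 < d - c := sub_pos.mpr hcd
  let p : I := ⟨d / (d - c), div_nonneg hd hΔ.le, (div_le_one hΔ).mpr (by linarith)⟩
  have hp : (p : ℝ) = d / (d - c) := rfl
  have hmean : ∫ x, id x ∂Ber(c, d, p) = 0 := by
    rw [integral_bernoulliMeasure, hp, id, id, smul_eq_mul, smul_eq_mul]; field_simp; ring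
  have hsupp : ∀ᵐ x ∂Ber(c, d, p), id x ∈ Set.Icc c d := by
    rw [ae_iff]
    exact bernoulliMeasure_apply_of_notMem_of_notMem p measurableSet_Icc.compl
      (by simp [hcd.le]) (by simp [hcd.le])
  have h := (hasSubgaussianMGF_of_mem_Icc_of_integral_eq_zero aemeasurable_id hsupp hmean).mgf_le t
  rw [mgf, integral_bernoulliMeasure, hp] at h
  convert h using 1
  · simp only [id, smul_eq_mul]; field_simp; ring
  · simp [Real.nnnorm_of_nonneg hΔ.le]
    ring

lemma mul_sub_sq_div_eight_le_two {t x Δ : ℝ} (hx : |x| ≤ Δ) :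
    t * x - t ^ 2 * Δ ^ 2 / 8 ≤ 2 := by
  have : t * x ≤ |t| * Δ := (le_abs_self _).trans
    (by rw [abs_mul]; exact mul_le_mul_of_nonneg_left hx (abs_nonneg t))
  nlinarith [sq_nonneg (|t| * Δ - 4), sq_abs t]

section Chord

/-- `chordIntercept t c d + chordSlope t c d * x` is the chord of
`x ↦ exp (t * x - t ^ 2 * (d - c) ^ 2 / 8)` over `[c, d]`. -/
noncomputable def chordIntercept (t c d : ℝ) : ℝ :=
  (d * exp (t * c - t ^ 2 * (d - c) ^ 2 / 8) - c * exp (t * d - t ^ 2 * (d - c) ^ 2 / 8)) / (d - c)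

noncomputable def chordSlope (t c d : ℝ) : ℝ :=
  (exp (t * d - t ^ 2 * (d - c) ^ 2 / 8) - exp (t * c - t ^ 2 * (d - c) ^ 2 / 8)) / (d - c)

variable {t c d x : ℝ}

@[fun_prop]
lemma measurable_chordIntercept {Ω : Type*} {m : MeasurableSpace Ω} {C D : Ω → ℝ}
    (hC : Measurable C) (hD : Measurable D) (t : ℝ) :
    Measurable fun ω => chordIntercept t (C ω) (D ω) := by
  unfold chordIntercept; fun_prop

@[fun_prop]
lemma measurable_chordSlope {Ω : Type*} {m : MeasurableSpace Ω} {C D : Ω → ℝ}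
    (hC : Measurable C) (hD : Measurable D) (t : ℝ) :
    Measurable fun ω => chordSlope t (C ω) (D ω) := by
  unfold chordSlope; fun_prop

lemma exp_mul_sub_le_chord (hcx : c ≤ x) (hxd : x ≤ d) (hcd : c < d) :
    exp (t * x - t ^ 2 * (d - c) ^ 2 / 8) ≤ chordIntercept t c d + chordSlope t c d * x := by
  have h := mul_le_mul_of_nonneg_right (exp_mul_le_secant hcx hxd hcd t)
    (exp_pos (-(t ^ 2 * (d - c) ^ 2 / 8))).le
  simp only [chordIntercept, chordSlope, sub_eq_add_neg _ (t ^ 2 * (d - c) ^ 2 / 8), exp_add]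
  exact h.trans_eq (by ring)

lemma chordIntercept_mem_Icc (hc : c ≤ 0) (hd : 0 ≤ d) (hcd : c < d) :
    chordIntercept t c d ∈ Set.Icc 0 1 := by
  refine ⟨div_nonneg ?_ (sub_pos.mpr hcd).le, ?_⟩
  · nlinarith [exp_pos (t * c - t ^ 2 * (d - c) ^ 2 / 8), exp_pos (t * d - t ^ 2 * (d - c) ^ 2 / 8)]
  have h := mul_le_mul_of_nonneg_right (two_point_hoeffding hc hd hcd t)
    (exp_pos (-(t ^ 2 * (d - c) ^ 2 / 8))).le
  rw [← exp_add, add_neg_cancel, exp_zero] at h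
  simp only [chordIntercept, sub_eq_add_neg _ (t ^ 2 * (d - c) ^ 2 / 8), exp_add]
  exact le_of_eq_of_le (by ring) h

lemma abs_chordSlope_mul_le (hc : c ≤ 0) (hd : 0 ≤ d) (hcx : c ≤ x) (hxd : x ≤ d) (hcd : c < d) :
    |chordSlope t c d * x| ≤ exp 2 := by
  have hΔ : 0 < d - c := sub_pos.mpr hcd
  have hxΔ : |x| ≤ d - c := abs_le.mpr ⟨by linarith, by linarith⟩
  have hexp : ∀ y, |y| ≤ d - c → exp (t * y - t ^ 2 * (d - c) ^ 2 / 8) ≤ exp 2 :=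
    fun y hy => exp_le_exp.mpr (mul_sub_sq_div_eight_le_two hy)
  have hdiff := abs_sub_le_of_nonneg_of_le (exp_pos _).le
    (hexp d (abs_le.mpr ⟨by linarith, by linarith⟩)) (exp_pos _).le
    (hexp c (abs_le.mpr ⟨by linarith, by linarith⟩))
  rw [chordSlope, abs_mul, abs_div, abs_of_pos hΔ, div_mul_eq_mul_div, div_le_iff₀ hΔ]
  exact mul_le_mul hdiff hxΔ (abs_nonneg _) (exp_pos _).le

end Chord

section CondExp

variable {Ω : Type*} {m m₀ : MeasurableSpace Ω} {μ : Measure Ω} [IsFiniteMeasure μ]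
  {X C D : Ω → ℝ}

lemma ae_nonpos_of_le_of_condExp_eq_zero (hm : m ≤ m₀) (hX : Integrable X μ)
    (hXm : μ[X|m] =ᵐ[μ] 0) (hC : StronglyMeasurable[m] C) (hCX : ∀ᵐ ω ∂μ, C ω ≤ X ω) :
    ∀ᵐ ω ∂μ, C ω ≤ 0 := by
  set S := {ω | 0 < C ω}
  have hS : MeasurableSet[m] S := measurableSet_lt measurable_const hC.measurable
  have hXS : ∀ᵐ ω ∂μ.restrict S, 0 < X ω := by
    rw [ae_restrict_iff' (hm _ hS)]
    filter_upwards [hCX] with ω h hω using hω.trans_le h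
  have hint : ∫ ω in S, X ω ∂μ = 0 := by
    rw [← setIntegral_condExp hm hX hS, integral_congr_ae (ae_restrict_of_ae hXm)]
    simp
  have hX0 := (setIntegral_eq_zero_iff_of_nonneg_ae (hXS.mono fun _ h => h.le)
    hX.integrableOn).mp hint
  have hS0 : μ S = 0 := by
    rw [← Measure.restrict_eq_zero, ← ae_eq_bot, ← Filter.eventually_false_iff_eq_bot]
    filter_upwards [hXS, hX0] with ω h h0 using h.ne' h0
  filter_upwards [measure_eq_zero_iff_ae_notMem.mp hS0] with ω h using not_lt.mp h

lemma ae_nonpos_nonneg_of_condExp_eq_zero (hm : m ≤ m₀) (hX : Integrable X μ)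
    (hXm : μ[X|m] =ᵐ[μ] 0) (hC : StronglyMeasurable[m] C) (hD : StronglyMeasurable[m] D)
    (hb : ∀ᵐ ω ∂μ, C ω ≤ X ω ∧ X ω ≤ D ω) : ∀ᵐ ω ∂μ, C ω ≤ 0 ∧ 0 ≤ D ω := by
  have hnegX : μ[-X|m] =ᵐ[μ] 0 := by
    filter_upwards [condExp_neg X m, hXm] with ω h h0
    simp [h, h0]
  filter_upwards [ae_nonpos_of_le_of_condExp_eq_zero hm hX hXm hC (hb.mono fun _ h => h.1),
    ae_nonpos_of_le_of_condExp_eq_zero hm hX.neg hnegX hD.neg (hb.mono fun _ h => neg_le_neg h.2)]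
    with ω hC hD
  exact ⟨hC, by simpa using hD⟩

lemma ae_exp_mul_sub_le_exp_two (hm : m ≤ m₀) (hX : Integrable X μ)
    (hXm : μ[X|m] =ᵐ[μ] 0) (hC : StronglyMeasurable[m] C) (hD : StronglyMeasurable[m] D)
    (hb : ∀ᵐ ω ∂μ, C ω ≤ X ω ∧ X ω ≤ D ω) (t : ℝ) :
    ∀ᵐ ω ∂μ, exp (t * X ω - t ^ 2 * (D ω - C ω) ^ 2 / 8) ≤ exp 2 := by
  filter_upwards [hb, ae_nonpos_nonneg_of_condExp_eq_zero hm hX hXm hC hD hb] with ω h h0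
  exact exp_le_exp.mpr (mul_sub_sq_div_eight_le_two (abs_le.mpr ⟨by linarith, by linarith⟩))

lemma integrable_exp_mul_sub (hm : m ≤ m₀) (hX : Integrable X μ)
    (hXm : μ[X|m] =ᵐ[μ] 0) (hC : StronglyMeasurable[m] C) (hD : StronglyMeasurable[m] D)
    (hb : ∀ᵐ ω ∂μ, C ω ≤ X ω ∧ X ω ≤ D ω) (t : ℝ) :
    Integrable (fun ω => exp (t * X ω - t ^ 2 * (D ω - C ω) ^ 2 / 8)) μ := by
  refine .of_mem_Icc 0 (exp 2) ?_ ?_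
  · have := (hC.mono hm).measurable
    have := (hD.mono hm).measurable
    have := hX.aemeasurable
    fun_prop
  · filter_upwards [ae_exp_mul_sub_le_exp_two hm hX hXm hC hD hb t] with ω h
    exact ⟨(exp_pos _).le, h⟩

lemma condExp_exp_mul_sub_le_one (hm : m ≤ m₀) (hX : Integrable X μ)
    (hXm : μ[X|m] =ᵐ[μ] 0) (hC : StronglyMeasurable[m] C) (hD : StronglyMeasurable[m] D)
    (hb : ∀ᵐ ω ∂μ, C ω ≤ X ω ∧ X ω ≤ D ω) (hCD : ∀ᵐ ω ∂μ, C ω < D ω) (t : ℝ) :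
    μ[fun ω => exp (t * X ω - t ^ 2 * (D ω - C ω) ^ 2 / 8)|m] ≤ᵐ[μ] 1 := by
  set P : Ω → ℝ := fun ω => chordIntercept t (C ω) (D ω)
  set Q : Ω → ℝ := fun ω => chordSlope t (C ω) (D ω)
  have hCm := hC.measurable
  have hDm := hD.measurable
  have hPm : StronglyMeasurable[m] P := Measurable.stronglyMeasurable (by fun_prop)
  have hQm : StronglyMeasurable[m] Q := Measurable.stronglyMeasurable (by fun_prop)
  have hgood : ∀ᵐ ω ∂μ, C ω < D ω ∧ (C ω ≤ X ω ∧ X ω ≤ D ω) ∧ (C ω ≤ 0 ∧ 0 ≤ D ω) := by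
    filter_upwards [hCD, hb, ae_nonpos_nonneg_of_condExp_eq_zero hm hX hXm hC hD hb]
      with ω h1 h2 h3 using ⟨h1, h2, h3⟩
  have hPint : Integrable P μ := .of_mem_Icc 0 1 (hPm.mono hm).measurable.aemeasurable <| by
    filter_upwards [hgood] with ω ⟨hCD, _, hC0, hD0⟩ using chordIntercept_mem_Icc hC0 hD0 hCD
  have hQXint : Integrable (Q * X) μ :=
    .of_mem_Icc (-exp 2) (exp 2) ((hQm.mono hm).aestronglyMeasurable.mul hX.1).aemeasurable <| by
      filter_upwards [hgood] with ω ⟨hCD, ⟨hCX, hXD⟩, hC0, hD0⟩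
      exact abs_le.mp (abs_chordSlope_mul_le hC0 hD0 hCX hXD hCD)
  have hchord : μ[P + Q * X|m] =ᵐ[μ] P := by
    filter_upwards [condExp_add hPint hQXint m,
      condExp_mul_of_stronglyMeasurable_left hQm hQXint hX, hXm] with ω h1 h2 h3
    rw [h1, Pi.add_apply, h2, condExp_of_stronglyMeasurable hm hPm hPint]
    simp [h3]
  have hle := condExp_mono (m := m) (integrable_exp_mul_sub hm hX hXm hC hD hb t)
      (hPint.add hQXint) <| by
    filter_upwards [hgood] with ω ⟨hCD, ⟨hCX, hXD⟩, _⟩ using exp_mul_sub_le_chord hCX hXD hCD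
  filter_upwards [hle, hchord, hgood] with ω h1 h2 ⟨hCD, _, hC0, hD0⟩
  exact h1.trans (h2.trans_le (chordIntercept_mem_Icc hC0 hD0 hCD).2)

lemma integral_mul_le_of_condExp_le_one (hm : m ≤ m₀) {Z Y : Ω → ℝ}
    (hZm : StronglyMeasurable[m] Z) (hZ : Integrable Z μ) (hZ0 : ∀ ω, 0 ≤ Z ω)
    (hY : Integrable Y μ) (hZY : Integrable (Z * Y) μ) (hYm : μ[Y|m] ≤ᵐ[μ] 1) :
    ∫ ω, Z ω * Y ω ∂μ ≤ ∫ ω, Z ω ∂μ := by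
  have hpull := condExp_mul_of_stronglyMeasurable_left hZm hZY hY
  calc ∫ ω, Z ω * Y ω ∂μ = ∫ ω, (Z * μ[Y|m]) ω ∂μ :=
        (integral_condExp hm).symm.trans (integral_congr_ae hpull)
    _ ≤ ∫ ω, Z ω ∂μ := by
      refine integral_mono_ae (integrable_condExp.congr hpull) hZ ?_
      filter_upwards [hYm] with ω h
      simpa using mul_le_of_le_one_right (hZ0 ω) h

end CondExp

section Supermartingale

noncomputable def hoeffdingProcess {Ω : Type*} (X C D : ℕ → Ω → ℝ) (t : ℝ) (n : ℕ) (ω : Ω) :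
    ℝ :=
  exp (t * ∑ i ∈ Icc 1 n, X i ω - t ^ 2 * (∑ i ∈ Icc 1 n, (D i ω - C i ω) ^ 2) / 8)

variable {Ω : Type*} {m : MeasurableSpace Ω} {μ : Measure Ω} [IsProbabilityMeasure μ]
  {ℱ : Filtration ℕ m} {X C D : ℕ → Ω → ℝ} {k : ℕ}

lemma hoeffdingProcess_succ (t : ℝ) (n : ℕ) :
    hoeffdingProcess X C D t (n + 1) = hoeffdingProcess X C D t n *
      fun ω => exp (t * X (n + 1) ω - t ^ 2 * (D (n + 1) ω - C (n + 1) ω) ^ 2 / 8) := by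
  ext ω
  simp only [hoeffdingProcess, Pi.mul_apply, ← exp_add, sum_Icc_succ_top (Nat.le_add_left 1 n)]
  ring_nf

lemma measurable_sum_and_sum_sq
    (hXmeas : ∀ i, 1 ≤ i → i ≤ k → StronglyMeasurable[ℱ i] (X i))
    (hCmeas : ∀ i, 1 ≤ i → i ≤ k → StronglyMeasurable[ℱ (i - 1)] (C i))
    (hDmeas : ∀ i, 1 ≤ i → i ≤ k → StronglyMeasurable[ℱ (i - 1)] (D i)) {n : ℕ} (hn : n ≤ k) :
    Measurable[ℱ n] (fun ω => ∑ i ∈ Icc 1 n, X i ω) ∧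
      Measurable[ℱ n] (fun ω => ∑ i ∈ Icc 1 n, (D i ω - C i ω) ^ 2) := by
  constructor <;> refine Finset.measurable_sum _ fun i hi => ?_ <;>
    obtain ⟨hi1, hin⟩ := mem_Icc.mp hi
  · exact ((hXmeas i hi1 (hin.trans hn)).mono (ℱ.mono hin)).measurable
  · have hle : ℱ (i - 1) ≤ ℱ n := ℱ.mono (by omega)
    have := ((hCmeas i hi1 (hin.trans hn)).mono hle).measurable
    have := ((hDmeas i hi1 (hin.trans hn)).mono hle).measurable
    fun_prop

lemma stronglyMeasurable_hoeffdingProcess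
    (hXmeas : ∀ i, 1 ≤ i → i ≤ k → StronglyMeasurable[ℱ i] (X i))
    (hCmeas : ∀ i, 1 ≤ i → i ≤ k → StronglyMeasurable[ℱ (i - 1)] (C i))
    (hDmeas : ∀ i, 1 ≤ i → i ≤ k → StronglyMeasurable[ℱ (i - 1)] (D i))
    (t : ℝ) {n : ℕ} (hn : n ≤ k) :
    StronglyMeasurable[ℱ n] (hoeffdingProcess X C D t n) := by
  obtain ⟨hM, hU⟩ := measurable_sum_and_sum_sq hXmeas hCmeas hDmeas hn
  unfold hoeffdingProcess
  exact Measurable.stronglyMeasurable (by fun_prop)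

lemma integrable_hoeffdingProcess_and_integral_le_one
    (hXint : ∀ i, 1 ≤ i → i ≤ k → Integrable (X i) μ)
    (hXmeas : ∀ i, 1 ≤ i → i ≤ k → StronglyMeasurable[ℱ i] (X i))
    (hcond : ∀ i, 1 ≤ i → i ≤ k → μ[X i|ℱ (i - 1)] =ᵐ[μ] 0)
    (hCmeas : ∀ i, 1 ≤ i → i ≤ k → StronglyMeasurable[ℱ (i - 1)] (C i))
    (hDmeas : ∀ i, 1 ≤ i → i ≤ k → StronglyMeasurable[ℱ (i - 1)] (D i))
    (hCltD : ∀ i, 1 ≤ i → i ≤ k → ∀ᵐ ω ∂μ, C i ω < D i ω)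
    (hbounds : ∀ i, 1 ≤ i → i ≤ k → ∀ᵐ ω ∂μ, C i ω ≤ X i ω ∧ X i ω ≤ D i ω) (t : ℝ) :
    ∀ n ≤ k, Integrable (hoeffdingProcess X C D t n) μ ∧
      ∫ ω, hoeffdingProcess X C D t n ω ∂μ ≤ 1 := by
  intro n
  induction n with
  | zero =>
    have h0 : hoeffdingProcess X C D t 0 = 1 := funext fun ω => by simp [hoeffdingProcess]
    exact fun _ => h0 ▸ ⟨integrable_const (1 : ℝ), by simp⟩
  | succ n ih =>
    intro hn
    obtain ⟨hZ, hZ1⟩ := ih (by omega)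
    have h1 : 1 ≤ n + 1 := by omega
    have hXn := hXint (n + 1) h1 hn
    have hcondn : μ[X (n + 1)|ℱ n] =ᵐ[μ] 0 := by simpa using hcond (n + 1) h1 hn
    have hCn : StronglyMeasurable[ℱ n] (C (n + 1)) := by simpa using hCmeas (n + 1) h1 hn
    have hDn : StronglyMeasurable[ℱ n] (D (n + 1)) := by simpa using hDmeas (n + 1) h1 hn
    have hbn := hbounds (n + 1) h1 hn
    have hY := integrable_exp_mul_sub (ℱ.le n) hXn hcondn hCn hDn hbn t
    have hZY := hZ.mul_bdd hY.1 <| by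
      filter_upwards [ae_exp_mul_sub_le_exp_two (ℱ.le n) hXn hcondn hCn hDn hbn t] with ω h
      rwa [norm_of_nonneg (exp_pos _).le]
    rw [hoeffdingProcess_succ]
    refine ⟨hZY, (integral_mul_le_of_condExp_le_one (ℱ.le n)
      (stronglyMeasurable_hoeffdingProcess hXmeas hCmeas hDmeas t (by omega)) hZ
      (fun ω => (exp_pos _).le) hY hZY
      (condExp_exp_mul_sub_le_one (ℱ.le n) hXn hcondn hCn hDn hbn (hCltD (n + 1) h1 hn) t)).trans
      hZ1⟩

lemma lintegral_hoeffdingProcess_le_one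
    (hXint : ∀ i, 1 ≤ i → i ≤ k → Integrable (X i) μ)
    (hXmeas : ∀ i, 1 ≤ i → i ≤ k → StronglyMeasurable[ℱ i] (X i))
    (hcond : ∀ i, 1 ≤ i → i ≤ k → μ[X i|ℱ (i - 1)] =ᵐ[μ] 0)
    (hCmeas : ∀ i, 1 ≤ i → i ≤ k → StronglyMeasurable[ℱ (i - 1)] (C i))
    (hDmeas : ∀ i, 1 ≤ i → i ≤ k → StronglyMeasurable[ℱ (i - 1)] (D i))
    (hCltD : ∀ i, 1 ≤ i → i ≤ k → ∀ᵐ ω ∂μ, C i ω < D i ω)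
    (hbounds : ∀ i, 1 ≤ i → i ≤ k → ∀ᵐ ω ∂μ, C i ω ≤ X i ω ∧ X i ω ≤ D i ω) (t : ℝ) :
    ∫⁻ ω, ENNReal.ofReal (hoeffdingProcess X C D t k ω) ∂μ ≤ 1 := by
  obtain ⟨hint, hle⟩ := integrable_hoeffdingProcess_and_integral_le_one hXint hXmeas hcond
    hCmeas hDmeas hCltD hbounds t k le_rfl
  rw [← ofReal_integral_eq_lintegral_ofReal hint (ae_of_all _ fun _ => (exp_pos _).le)]
  exact ENNReal.ofReal_le_one.mpr hle

end Supermartingale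

lemma lintegral_exp_mul_sub_mul_sq {a : ℝ} (ha : 0 < a) (c : ℝ) :
    ∫⁻ s, ENNReal.ofReal (exp (c * s - a * s ^ 2 / 2)) =
      ENNReal.ofReal (sqrt (2 * π / a) * exp (c ^ 2 / (2 * a))) := by
  have hsq : ∀ s, exp (c * s - a * s ^ 2 / 2) =
      exp (c ^ 2 / (2 * a)) * exp (-(a / 2) * (s - c / a) ^ 2) := by
    intro s
    rw [← exp_add]
    congr 1
    field_simp
    ring
  simp_rw [hsq]
  have hint := ((integrable_exp_neg_mul_sq (by positivity : 0 < a / 2)).comp_sub_right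
    (c / a)).const_mul (exp (c ^ 2 / (2 * a)))
  rw [← ofReal_integral_eq_lintegral_ofReal hint (ae_of_all _ fun _ => by positivity),
    integral_const_mul,
    integral_sub_right_eq_self (fun s => exp (-(a / 2) * s ^ 2)), integral_gaussian, mul_comm]
  congr 3
  field_simp

/-- Method of mixtures: integrate the bound over `t` against the centred Gaussian of variance
`1 / β`. -/
lemma lintegral_sqrt_mul_exp_sq_le_one {Ω : Type*} {m : MeasurableSpace Ω} {μ : Measure Ω}
    [SFinite μ] {M V : Ω → ℝ} (hM : Measurable M) (hV : Measurable V) (hV0 : ∀ ω, 0 ≤ V ω)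
    {β : ℝ} (hβ : 0 < β) (h : ∀ t, ∫⁻ ω, ENNReal.ofReal (exp (t * M ω - t ^ 2 * V ω / 2)) ∂μ ≤ 1) :
    ∫⁻ ω, ENNReal.ofReal (sqrt (β / (V ω + β)) * exp (M ω ^ 2 / (2 * (V ω + β)))) ∂μ ≤ 1 := by
  set w := ENNReal.ofReal (sqrt (β / (2 * π)))
  set F : Ω → ℝ → ENNReal := fun ω t =>
    ENNReal.ofReal (exp (t * M ω - t ^ 2 * V ω / 2)) * ENNReal.ofReal (exp (0 * t - β * t ^ 2 / 2))
  have hmix : ∀ ω, ENNReal.ofReal (sqrt (β / (V ω + β)) * exp (M ω ^ 2 / (2 * (V ω + β)))) =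
      w * ∫⁻ t, F ω t := by
    intro ω
    have hVβ : 0 < V ω + β := by linarith [hV0 ω]
    have hF : ∀ t, F ω t = ENNReal.ofReal (exp (M ω * t - (V ω + β) * t ^ 2 / 2)) := by
      intro t
      simp only [F]
      rw [← ENNReal.ofReal_mul (exp_pos _).le, ← exp_add]
      ring_nf
    simp_rw [hF]
    rw [lintegral_exp_mul_sub_mul_sq hVβ, ← ENNReal.ofReal_mul (sqrt_nonneg _), ← mul_assoc,
      ← sqrt_mul (by positivity)]
    congr 4
    field_simp
  have hone : w * ∫⁻ t, ENNReal.ofReal (exp (0 * t - β * t ^ 2 / 2)) = 1 := by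
    rw [lintegral_exp_mul_sub_mul_sq hβ, ← ENNReal.ofReal_mul (sqrt_nonneg _), ← mul_assoc,
      ← sqrt_mul (by positivity)]
    field_simp
    simp
  have hF : AEMeasurable (Function.uncurry F) (μ.prod volume) := by
    unfold F
    fun_prop
  calc _ = ∫⁻ ω, w * ∫⁻ t, F ω t ∂volume ∂μ := lintegral_congr hmix
    _ = w * ∫⁻ t, ∫⁻ ω, F ω t ∂μ := by
      rw [lintegral_const_mul' _ _ ENNReal.ofReal_ne_top, lintegral_lintegral_swap hF]
    _ ≤ w * ∫⁻ t, ENNReal.ofReal (exp (0 * t - β * t ^ 2 / 2)) := by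
      gcongr with t
      rw [lintegral_mul_const' _ _ ENNReal.ofReal_ne_top]
      exact mul_le_of_le_one_left' (h t)
    _ = 1 := hone

lemma exp_le_sqrt_mul_exp_of_sqrt_le_abs {M V β L : ℝ} (hV : 0 ≤ V) (hβ : 0 < β) (hL : 1 ≤ L)
    (h : sqrt ((V + β) * (2 + log (V / β + 1)) * L) ≤ |M|) :
    exp L ≤ sqrt (β / (V + β)) * exp (M ^ 2 / (2 * (V + β))) := by
  have ha : 0 < V + β := by linarith
  set ℓ := log ((V + β) / β)
  have hℓ : log (V / β + 1) = ℓ := by congr 1; field_simp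
  have hℓ0 : 0 ≤ ℓ := log_nonneg ((one_le_div hβ).mpr (by linarith))
  have hM : (V + β) * (2 + ℓ) * L ≤ M ^ 2 := by
    rw [← hℓ, ← sq_abs M]; exact (sqrt_le_iff.mp h).2
  have hexp : L + ℓ / 2 ≤ M ^ 2 / (2 * (V + β)) := by
    rw [le_div_iff₀ (by positivity)]
    nlinarith [mul_nonneg (mul_nonneg hℓ0 (sub_nonneg.mpr hL)) ha.le]
  have hsqrt : sqrt (β / (V + β)) = exp (-(ℓ / 2)) := by
    rw [← inv_div, sqrt_inv, ← exp_log (sqrt_pos.mpr (div_pos ha hβ)),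
      log_sqrt (div_pos ha hβ).le, ← exp_neg]
  calc exp L = sqrt (β / (V + β)) * exp (L + ℓ / 2) := by rw [hsqrt, ← exp_add]; ring_nf
    _ ≤ _ := by gcongr

lemma measure_sqrt_le_abs_le_of_lintegral_exp_le_one {Ω : Type*} {m : MeasurableSpace Ω}
    {μ : Measure Ω} [SFinite μ] {M V : Ω → ℝ} (hM : Measurable M) (hV : Measurable V)
    (hV0 : ∀ ω, 0 ≤ V ω) {β δ : ℝ} (hβ : 0 < β) (hδ0 : 0 < δ) (hδ1 : δ ≤ (exp 1)⁻¹)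
    (h : ∀ t, ∫⁻ ω, ENNReal.ofReal (exp (t * M ω - t ^ 2 * V ω / 2)) ∂μ ≤ 1) :
    μ {ω | sqrt ((V ω + β) * (2 + log (V ω / β + 1)) * log (1 / δ)) ≤ |M ω|} ≤
      ENNReal.ofReal δ := by
  set Y := fun ω => ENNReal.ofReal (sqrt (β / (V ω + β)) * exp (M ω ^ 2 / (2 * (V ω + β))))
  have hL : 1 ≤ log (1 / δ) := by
    rw [one_div, log_inv, le_neg, ← log_exp (-1), exp_neg]
    exact log_le_log hδ0 hδ1
  have hδ : ENNReal.ofReal (exp (log (1 / δ))) = (ENNReal.ofReal δ)⁻¹ := by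
    rw [exp_log (by positivity), one_div, ENNReal.ofReal_inv_of_pos hδ0]
  calc _ ≤ μ {ω | ENNReal.ofReal (exp (log (1 / δ))) ≤ Y ω} :=
        measure_mono fun ω hω => ENNReal.ofReal_le_ofReal
          (exp_le_sqrt_mul_exp_of_sqrt_le_abs (hV0 ω) hβ hL hω)
    _ ≤ (∫⁻ ω, Y ω ∂μ) / ENNReal.ofReal (exp (log (1 / δ))) :=
        meas_ge_le_lintegral_div (Measurable.aemeasurable (by fun_prop)) (by simp [exp_pos])
          ENNReal.ofReal_ne_top
    _ ≤ ENNReal.ofReal δ := by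
        rw [hδ, ENNReal.div_eq_inv_mul, inv_inv]
        exact mul_le_of_le_one_right' (lintegral_sqrt_mul_exp_sq_le_one hM hV hV0 hβ h)

theorem self_normalized_martingale_concentration_general
    {Ω : Type*} {m : MeasurableSpace Ω} (μ : Measure Ω) [IsProbabilityMeasure μ]
    (k : ℕ) (ℱ : Filtration ℕ m) (X C D : ℕ → Ω → ℝ)
    (hXint : ∀ i, 1 ≤ i → i ≤ k → Integrable (X i) μ)
    (hXmeas : ∀ i, 1 ≤ i → i ≤ k → StronglyMeasurable[ℱ i] (X i))
    (hcond : ∀ i, 1 ≤ i → i ≤ k → μ[X i|ℱ (i - 1)] =ᵐ[μ] 0)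
    (hCmeas : ∀ i, 1 ≤ i → i ≤ k → StronglyMeasurable[ℱ (i - 1)] (C i))
    (hDmeas : ∀ i, 1 ≤ i → i ≤ k → StronglyMeasurable[ℱ (i - 1)] (D i))
    (hCltD : ∀ i, 1 ≤ i → i ≤ k → ∀ᵐ ω ∂μ, C i ω < D i ω)
    (hbounds : ∀ i, 1 ≤ i → i ≤ k → ∀ᵐ ω ∂μ, C i ω ≤ X i ω ∧ X i ω ≤ D i ω)
    (β δ : ℝ) (hβ : 0 < β) (hδ0 : 0 < δ) (hδ1 : δ ≤ (Real.exp 1)⁻¹) :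
    μ {ω | Real.sqrt
        (((∑ i ∈ Finset.Icc 1 k, (D i ω - C i ω) ^ 2) / 4 + β) *
          (2 + Real.log ((∑ i ∈ Finset.Icc 1 k, (D i ω - C i ω) ^ 2) / (4 * β) + 1)) *
          Real.log (1 / δ)) ≤ |∑ i ∈ Finset.Icc 1 k, X i ω|} ≤ ENNReal.ofReal δ := by
  obtain ⟨hM, hU⟩ := measurable_sum_and_sum_sq hXmeas hCmeas hDmeas le_rfl
  have hmgf (t : ℝ) : ∫⁻ ω, ENNReal.ofReal (exp (t * ∑ i ∈ Icc 1 k, X i ω -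
      t ^ 2 * ((∑ i ∈ Icc 1 k, (D i ω - C i ω) ^ 2) / 4) / 2)) ∂μ ≤ 1 := by
    convert lintegral_hoeffdingProcess_le_one hXint hXmeas hcond hCmeas hDmeas hCltD hbounds t
      using 4
    rw [hoeffdingProcess]
    ring_nf
  simpa only [div_div] using measure_sqrt_le_abs_le_of_lintegral_exp_le_one
    (hM.mono (ℱ.le k) le_rfl) ((hU.mono (ℱ.le k) le_rfl).div_const 4) (fun ω => by positivity)
    hβ hδ0 hδ1 hmgf

/-- Self-normalized martingale concentration: in the martingale setup with
predictable bounds `C_i ≤ X_i ≤ D_i`, writing `M_k = Σ_{i=1}^k X_i` and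
`U_k² = Σ_{i=1}^k (D_i − C_i)²`, for every `k ≥ 1`, `β > 0` and `δ ∈ (0, 1/e]`,
`P(|M_k| ≥ √((U_k²/4 + β)(2 + log(U_k²/(4β) + 1)) log(1/δ))) ≤ δ`. -/
theorem self_normalized_martingale_concentration
    {Ω : Type*} {m : MeasurableSpace Ω} (μ : Measure Ω) [IsProbabilityMeasure μ]
    (k : ℕ) (hk : 1 ≤ k) (ℱ : Filtration ℕ m) (X C D : ℕ → Ω → ℝ)
    (hXint : ∀ i, 1 ≤ i → i ≤ k → Integrable (X i) μ)
    (hXmeas : ∀ i, 1 ≤ i → i ≤ k → StronglyMeasurable[ℱ i] (X i))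
    (hcond : ∀ i, 1 ≤ i → i ≤ k → μ[X i|ℱ (i - 1)] =ᵐ[μ] 0)
    (hCmeas : ∀ i, 1 ≤ i → i ≤ k → StronglyMeasurable[ℱ (i - 1)] (C i))
    (hDmeas : ∀ i, 1 ≤ i → i ≤ k → StronglyMeasurable[ℱ (i - 1)] (D i))
    (hCltD : ∀ i, 1 ≤ i → i ≤ k → ∀ᵐ ω ∂μ, C i ω < D i ω)
    (hbounds : ∀ i, 1 ≤ i → i ≤ k → ∀ᵐ ω ∂μ, C i ω ≤ X i ω ∧ X i ω ≤ D i ω)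
    (β δ : ℝ) (hβ : 0 < β) (hδ0 : 0 < δ) (hδ1 : δ ≤ (Real.exp 1)⁻¹) :
    μ {ω | Real.sqrt
        (((∑ i ∈ Finset.Icc 1 k, (D i ω - C i ω) ^ 2) / 4 + β) *
          (2 + Real.log ((∑ i ∈ Finset.Icc 1 k, (D i ω - C i ω) ^ 2) / (4 * β) + 1)) *
          Real.log (1 / δ)) ≤ |∑ i ∈ Finset.Icc 1 k, X i ω|} ≤ ENNReal.ofReal δ :=
  self_normalized_martingale_concentration_general μ k ℱ X C D hXint hXmeas hcond hCmeas hDmeas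
    hCltD hbounds β δ hβ hδ0 hδ1
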